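/- arXiv:2308.10796 — 3 statements merged into one kernel-verified Lean document; each statement's English description precedes it below -/
import Mathlib

section
/- Let a > 0, C ≥ 0, t₀ ∈ ℝ, and let f be a complex-valued function that is holomorphic and nonvanishing on an open set containing the closed disc {z ∈ ℂ : |z − t₀| ≤ a}, and let F be a holomorphic branch of the logarithm of f on this disc (i.e., exp(F(z)) = f(z) there). If |log |f(z)|| ≤ C for all z with |z − t₀| ≤ a, then for every integer m ≥ 1 the m-th complex derivative of F satisfies |F⁽ᵐ⁾(t₀)| ≤ 3 · 2ᵐ · m! · C / aᵐ. -/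
/-!
Since `‖exp (F z)‖ = exp (re (F z))`, the hypothesis says `|re F| ≤ C` on the disc, so it suffices
to bound the derivatives of a holomorphic function at the centre of a circle by its real part on
the circle. On the circle `conj (z - c) = R ^ 2 / (z - c)`, which turns
`∮ conj (F z) / (z - c) ^ (n + 2) dz` into the conjugate of `∮ (z - c) ^ n F z dz`, which vanishes
by Cauchy's theorem. Adding this integral to Cauchy's formula for `F⁽ⁿ⁺¹⁾(c)` replaces `F` by
`F + conj F = 2 re F` (a Schwarz-type formula), and the standard estimate of the integral gives
`‖F⁽ᵐ⁾(c)‖ ≤ 2 m! C / R ^ m`.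
-/

open Complex Metric Real ComplexConjugate

theorem circleIntegral.integral_conj (g : ℂ → ℂ) (c : ℂ) (R : ℝ) :
    ∮ z in C(c, R), conj (g z) = -(R ^ 2 : ℂ) * conj (∮ z in C(c, R), g z / (z - c) ^ 2) := by
  have hpt (θ : ℝ) : deriv (circleMap c R) θ • conj (g (circleMap c R θ)) =
      -(R ^ 2 : ℂ) * conj (deriv (circleMap c R) θ •
        (g (circleMap c R θ) / (circleMap c R θ - c) ^ 2)) := by
    simp only [deriv_circleMap, circleMap_sub_center, smul_eq_mul, map_mul, map_div₀, map_pow,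
      conj_I]
    rcases eq_or_ne R 0 with rfl | hR
    · simp
    have hw : conj (circleMap 0 R θ) ≠ 0 := by
      simpa using circleMap_ne_center (c := 0) (θ := θ) hR
    have hnorm : circleMap 0 R θ * conj (circleMap 0 R θ) = R ^ 2 := by
      rw [mul_conj', norm_circleMap_zero]; norm_cast; exact sq_abs R
    rw [← hnorm]
    field_simp
  simp only [circleIntegral, hpt, intervalIntegral.integral_of_le two_pi_pos.le,
    MeasureTheory.integral_const_mul, _root_.integral_conj]

theorem conj_sub_eq_sq_div_of_mem_sphere {z c : ℂ} {R : ℝ} (hz : z ∈ sphere c R) :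
    conj (z - c) = R ^ 2 / (z - c) := by
  rcases eq_or_ne (z - c) 0 with h | h
  · simp [h]
  rw [eq_div_iff h, mul_comm, mul_conj', ← Complex.dist_eq, mem_sphere.mp hz]

section Disc

variable {F : ℂ → ℂ} {c : ℂ} {R : ℝ}

theorem DifferentiableOn.circleIntegral_one_div_sub_center_pow_smul_conj_eq_zero (hR : 0 < R)
    (hF : DifferentiableOn ℂ F (closedBall c R)) (n : ℕ) :
    ∮ z in C(c, R), (1 / (z - c) ^ (n + 2)) • conj (F z) = 0 := by
  set k : ℂ := ((R : ℂ) ^ 2)⁻¹ ^ (n + 2)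
  have hzc {z : ℂ} (hz : z ∈ sphere c R) : z - c ≠ 0 :=
    sub_ne_zero.mpr (ne_of_mem_sphere hz hR.ne')
  have hcauchy : ∮ z in C(c, R), (z - c) ^ n * F z = 0 :=
    (((differentiableOn_id.sub_const c).pow n).mul hF).mono
      closure_ball_subset_closedBall |>.diffContOnCl.circleIntegral_eq_zero hR.le
  calc ∮ z in C(c, R), (1 / (z - c) ^ (n + 2)) • conj (F z)
      = ∮ z in C(c, R), conj (k * ((z - c) ^ (n + 2) * F z)) := by
        refine circleIntegral.integral_congr hR.le fun z hz ↦ ?_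
        simp only [k, smul_eq_mul, map_mul, map_pow, map_inv₀, conj_ofReal,
          conj_sub_eq_sq_div_of_mem_sphere hz, div_pow, inv_pow]
        field_simp [hzc hz, ofReal_ne_zero.mpr hR.ne']
    _ = -(R ^ 2 : ℂ) * conj (∮ z in C(c, R), k * ((z - c) ^ n * F z)) := by
        rw [circleIntegral.integral_conj]
        congr 2
        refine circleIntegral.integral_congr hR.le fun z hz ↦ ?_
        field_simp [hzc hz]
        ring
    _ = 0 := by rw [circleIntegral.integral_const_mul, hcauchy]; simp

theorem DifferentiableOn.circleIntegral_one_div_sub_center_pow_smul_re (hR : 0 < R)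
    (hF : DifferentiableOn ℂ F (closedBall c R)) (n : ℕ) :
    ∮ z in C(c, R), (1 / (z - c) ^ (n + 2)) • ((2 * (F z).re : ℝ) : ℂ)
      = (2 * π * I / (n + 1).factorial) • iteratedDeriv (n + 1) F c := by
  have hFc : ContinuousOn F (sphere c R) := hF.continuousOn.mono sphere_subset_closedBall
  have hkernel : ContinuousOn (fun z ↦ 1 / (z - c) ^ (n + 2)) (sphere c R) :=
    continuousOn_const.div (by fun_prop) fun z hz ↦
      pow_ne_zero _ (sub_ne_zero.mpr (ne_of_mem_sphere hz hR.ne'))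
  have hint : CircleIntegrable (fun z ↦ (1 / (z - c) ^ (n + 2)) • F z) c R :=
    (hkernel.smul hFc).circleIntegrable hR.le
  have hint' : CircleIntegrable (fun z ↦ (1 / (z - c) ^ (n + 2)) • conj (F z)) c R :=
    (hkernel.smul (continuous_conj.comp_continuousOn hFc)).circleIntegrable hR.le
  simp only [← add_conj, smul_add]
  rw [circleIntegral.integral_add hint hint',
    hF.circleIntegral_one_div_sub_center_pow_smul hR,
    hF.circleIntegral_one_div_sub_center_pow_smul_conj_eq_zero hR, add_zero]

theorem DifferentiableOn.norm_iteratedDeriv_le_of_forall_mem_sphere_abs_re_le {M : ℝ}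
    (hR : 0 < R) (hF : DifferentiableOn ℂ F (closedBall c R))
    (hM : ∀ z ∈ sphere c R, |(F z).re| ≤ M) {n : ℕ} (hn : n ≠ 0) :
    ‖iteratedDeriv n F c‖ ≤ 2 * n.factorial * M / R ^ n := by
  obtain ⟨k, rfl⟩ := Nat.exists_eq_succ_of_ne_zero hn
  have hbound : ∀ z ∈ sphere c R, ‖(1 / (z - c) ^ (k + 2)) • ((2 * (F z).re : ℝ) : ℂ)‖
      ≤ 2 * M / R ^ (k + 2) := fun z hz ↦ by
    rw [norm_smul, norm_div, norm_one, norm_pow, mem_sphere_iff_norm.mp hz, norm_real,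
      Real.norm_eq_abs, abs_mul, abs_two, one_div_mul_eq_div]
    gcongr
    exact hM z hz
  have hD : iteratedDeriv (k + 1) F c = (k + 1).factorial • (2 * π * I)⁻¹ •
      ∮ z in C(c, R), (1 / (z - c) ^ (k + 2)) • ((2 * (F z).re : ℝ) : ℂ) := by
    have hfact :
        ((k + 1).factorial : ℂ) * ((2 * π * I)⁻¹ * (2 * π * I / (k + 1).factorial)) = 1 := by
      field_simp [two_pi_I_ne_zero, Nat.cast_ne_zero.mpr (Nat.factorial_ne_zero (k + 1))]
    rw [hF.circleIntegral_one_div_sub_center_pow_smul_re hR, smul_smul,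
      ← Nat.cast_smul_eq_nsmul ℂ, smul_smul, hfact, one_smul]
  calc ‖iteratedDeriv (k + 1) F c‖ ≤ (k + 1).factorial * (R * (2 * M / R ^ (k + 2))) := by
        rw [hD, RCLike.norm_nsmul (K := ℂ), nsmul_eq_mul]
        gcongr
        exact circleIntegral.norm_two_pi_i_inv_smul_integral_le_of_norm_le_const hR.le hbound
    _ = 2 * (k + 1).factorial * M / R ^ (k + 1) := by
        field_simp
        ring

end Disc

theorem log_branch_iteratedDeriv_bound_general
    (a C : ℝ) (ha : 0 < a) (t₀ : ℝ)
    (f F : ℂ → ℂ) (U : Set ℂ)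
    (hball : closedBall (t₀ : ℂ) a ⊆ U)
    (hF : DifferentiableOn ℂ F U)
    (hFf : ∀ z ∈ closedBall (t₀ : ℂ) a, Complex.exp (F z) = f z)
    (hbound : ∀ z ∈ closedBall (t₀ : ℂ) a, |Real.log (‖f z‖)| ≤ C)
    (m : ℕ) (hm : 1 ≤ m) :
    ‖iteratedDeriv m F (t₀ : ℂ)‖ ≤ 3 * 2 ^ m * m.factorial * C / a ^ m := by
  have hre : ∀ z ∈ closedBall (t₀ : ℂ) a, |(F z).re| ≤ C := fun z hz ↦ by
    simpa [← hFf z hz, norm_exp] using hbound z hz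
  have hC : 0 ≤ C := (abs_nonneg _).trans (hre _ (mem_closedBall_self ha.le))
  calc ‖iteratedDeriv m F t₀‖ ≤ 2 * m.factorial * C / a ^ m :=
        (hF.mono hball).norm_iteratedDeriv_le_of_forall_mem_sphere_abs_re_le ha
          (fun z hz ↦ hre z (sphere_subset_closedBall hz)) (Nat.one_le_iff_ne_zero.mp hm)
    _ ≤ 3 * 2 ^ m * m.factorial * C / a ^ m := by
        gcongr
        linarith [one_le_pow₀ (M₀ := ℝ) (n := m) one_le_two]

/-- Cauchy-estimate-type bound on the derivatives of a holomorphic branch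
`F` of the logarithm of a nonvanishing holomorphic function `f`, given the bound
`|log |f|| ≤ C` on a closed disc of radius `a` around the real point `t₀`. -/
theorem log_branch_iteratedDeriv_bound
    (a C : ℝ) (ha : 0 < a) (hC : 0 ≤ C) (t₀ : ℝ)
    (f F : ℂ → ℂ) (U : Set ℂ) (hU : IsOpen U)
    (hball : closedBall (t₀ : ℂ) a ⊆ U)
    (hf : DifferentiableOn ℂ f U)
    (hf0 : ∀ z ∈ U, f z ≠ 0)
    (hF : DifferentiableOn ℂ F U)
    (hFf : ∀ z ∈ closedBall (t₀ : ℂ) a, Complex.exp (F z) = f z)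
    (hbound : ∀ z ∈ closedBall (t₀ : ℂ) a, |Real.log (‖f z‖)| ≤ C)
    (m : ℕ) (hm : 1 ≤ m) :
    ‖iteratedDeriv m F (t₀ : ℂ)‖ ≤ 3 * 2 ^ m * m.factorial * C / a ^ m :=
  log_branch_iteratedDeriv_bound_general a C ha t₀ f F U hball hF hFf hbound m hm
end

section
/- Let a > 0, C ≥ 0, t₀ ∈ ℝ, and let f be holomorphic and nonvanishing on an open set containing the closed disc {z ∈ ℂ : |z − t₀| ≤ a}, with |log |f(z)|| ≤ C on this disc. Let F be a holomorphic branch of the logarithm of f on the disc and let φ(t) = Im F(t) for real t near t₀. Then for every integer m ≥ 1, |dᵐφ/dtᵐ (t₀)| ≤ 3 · 2ᵐ · m! · C / aᵐ. -/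
/-! On the circle `|z - c| = R` one has `conj (z - c) = R² / (z - c)`, so for `n ≥ 1` the Cauchy
integral of `conj F` against `(z - c)^-(n+1)` is the conjugate of `∮ (z - c)^(n-1) F`, which
vanishes. Substituting `F = 2 Re F - conj F` into Cauchy's formula for `F^(n)(c)` thus expresses it
through `Re F` alone, whence `|F^(n)(c)| ≤ 2 n! sup |Re F| / R^n`. For a logarithm `F` of `f` the
real part is `log |f|`, and the derivatives of `Im F` along the real axis are the imaginary parts
of the complex derivatives. -/

open Complex Metric
open scoped Real ComplexConjugate Topology

namespace Complex

variable {c : ℂ} {R : ℝ}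

lemma conj_circleMap_zero (hR : R ≠ 0) (θ : ℝ) :
    conj (circleMap 0 R θ) = (R : ℂ) ^ 2 / circleMap 0 R θ := by
  rw [eq_div_iff (circleMap_ne_center hR), mul_comm, mul_conj, normSq_eq_norm_sq,
    norm_circleMap_zero]
  simp

lemma circleIntegral_conj_div_sub_center_pow (g : ℂ → ℂ) (hR : R ≠ 0) (k : ℕ) :
    ∮ z in C(c, R), conj (g z) / (z - c) ^ (k + 2)
      = -conj (∮ z in C(c, R), (z - c) ^ k * g z) / (R : ℂ) ^ (2 * k + 2) := by
  simp only [circleIntegral, ← intervalIntegral.intervalIntegral_conj,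
    ← intervalIntegral.integral_neg, ← intervalIntegral.integral_div]
  refine intervalIntegral.integral_congr fun θ _ => ?_
  have hw : circleMap 0 R θ ≠ 0 := circleMap_ne_center hR
  have hR₀ : (R : ℂ) ≠ 0 := ofReal_ne_zero.mpr hR
  simp only [deriv_circleMap, circleMap_sub_center, smul_eq_mul, map_mul, map_pow, conj_I,
    conj_circleMap_zero hR, div_pow]
  field_simp
  ring

variable {F : ℂ → ℂ}

lemma _root_.DiffContOnCl.circleIntegral_conj_div_sub_center_pow_eq_zero
    (hR : 0 < R) (hF : DiffContOnCl ℂ F (ball c R)) (k : ℕ) :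
    ∮ z in C(c, R), conj (F z) / (z - c) ^ (k + 2) = 0 := by
  have hmoment : DiffContOnCl ℂ (fun z => (z - c) ^ k * F z) (ball c R) :=
    (((differentiable_id.sub_const c).pow k).diffContOnCl).smul hF
  rw [circleIntegral_conj_div_sub_center_pow F hR.ne', hmoment.circleIntegral_eq_zero hR.le]
  simp

lemma _root_.DiffContOnCl.iteratedDeriv_eq_circleIntegral_re (hR : 0 < R)
    (hF : DiffContOnCl ℂ F (ball c R)) {n : ℕ} (hn : n ≠ 0) :
    iteratedDeriv n F c
      = (n.factorial / (π * I)) * ∮ z in C(c, R), ((F z).re : ℂ) / (z - c) ^ (n + 1) := by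
  obtain ⟨k, rfl⟩ := Nat.exists_eq_add_one_of_ne_zero hn
  have hcont : ContinuousOn F (sphere c R) := hF.continuousOn_ball.mono sphere_subset_closedBall
  have hpow : ∀ z ∈ sphere c R, (z - c) ^ (k + 1 + 1) ≠ 0 := fun z hz =>
    pow_ne_zero _ (sub_ne_zero.mpr (ne_of_mem_sphere hz hR.ne'))
  have hsplit : (fun z => (1 / (z - c) ^ (k + 1 + 1)) • F z) = fun z =>
      2 * (((F z).re : ℂ) / (z - c) ^ (k + 1 + 1)) - conj (F z) / (z - c) ^ (k + 1 + 1) := by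
    funext z
    have hconj := add_conj (F z)
    push_cast at hconj
    rw [smul_eq_mul]
    linear_combination (1 / (z - c) ^ (k + 1 + 1)) * hconj
  have hcauchy := hF.circleIntegral_one_div_sub_center_pow_smul hR (k + 1)
  rw [hsplit, circleIntegral.integral_sub, circleIntegral.integral_const_mul,
    hF.circleIntegral_conj_div_sub_center_pow_eq_zero hR] at hcauchy
  · rw [sub_zero, smul_eq_mul] at hcauchy
    have hπ : (π : ℂ) ≠ 0 := ofReal_ne_zero.mpr Real.pi_ne_zero
    have hfac : ((k + 1).factorial : ℂ) ≠ 0 := Nat.cast_ne_zero.mpr (Nat.factorial_ne_zero _)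
    rw [div_mul_eq_mul_div, eq_div_iff hfac] at hcauchy
    rw [div_mul_eq_mul_div, eq_div_iff (mul_ne_zero hπ I_ne_zero)]
    linear_combination -hcauchy / 2
  all_goals exact ContinuousOn.circleIntegrable hR.le (by fun_prop (disch := exact hpow))

lemma _root_.DiffContOnCl.norm_iteratedDeriv_le_of_forall_mem_sphere_abs_re_le {C : ℝ}
    (hR : 0 < R) (hF : DiffContOnCl ℂ F (ball c R)) {n : ℕ} (hn : n ≠ 0)
    (hC : ∀ z ∈ sphere c R, |(F z).re| ≤ C) :
    ‖iteratedDeriv n F c‖ ≤ 2 * n.factorial * C / R ^ n := by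
  have hintegrand : ∀ z ∈ sphere c R, ‖((F z).re : ℂ) / (z - c) ^ (n + 1)‖ ≤ C / R ^ (n + 1) :=
    fun z hz => by
      rw [norm_div, norm_pow, norm_real, Real.norm_eq_abs, ← dist_eq_norm, mem_sphere.mp hz]
      gcongr
      exact hC z hz
  rw [hF.iteratedDeriv_eq_circleIntegral_re hR hn, norm_mul]
  calc ‖(n.factorial : ℂ) / (π * I)‖ * ‖∮ z in C(c, R), ((F z).re : ℂ) / (z - c) ^ (n + 1)‖
      ≤ n.factorial / π * (2 * π * R * (C / R ^ (n + 1))) := by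
        gcongr
        · simp [abs_of_pos Real.pi_pos]
        · exact circleIntegral.norm_integral_le_of_norm_le_const hR.le hintegrand
    _ = 2 * n.factorial * C / R ^ n := by
        field_simp
        ring

lemma iteratedDeriv_im_comp_ofReal {U : Set ℂ} (hU : IsOpen U) (hF : DifferentiableOn ℂ F U)
    (n : ℕ) {t : ℝ} (ht : (t : ℂ) ∈ U) :
    iteratedDeriv n (fun s : ℝ => (F s).im) t = (iteratedDeriv n F t).im := by
  induction n generalizing t with
  | zero => simp
  | succ n ih =>
    have hUℝ : {s : ℝ | (s : ℂ) ∈ U} ∈ 𝓝 t :=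
      (hU.preimage continuous_ofReal).mem_nhds ht
    have hderiv : HasDerivAt (iteratedDeriv n F) (iteratedDeriv (n + 1) F t) t := by
      rw [iteratedDeriv_succ, iteratedDeriv_eq_iterate]
      exact ((hF.analyticOnNhd hU).iterated_deriv n t ht).differentiableAt.hasDerivAt
    have heq : iteratedDeriv n (fun s : ℝ => (F s).im) =ᶠ[𝓝 t]
        fun s : ℝ => (iteratedDeriv n F s).im := by
      filter_upwards [hUℝ] with s hs using ih hs
    rw [iteratedDeriv_succ, heq.deriv_eq]
    exact (imCLM.hasFDerivAt.comp_hasDerivAt t hderiv.comp_ofReal).deriv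

end Complex

theorem real_time_deriv_phase_bound_general
    (a C : ℝ) (ha : 0 < a) (hC : 0 ≤ C) (t₀ : ℝ)
    (f F : ℂ → ℂ) (U : Set ℂ) (hU : IsOpen U)
    (hball : closedBall (t₀ : ℂ) a ⊆ U)
    (hF : DifferentiableOn ℂ F U)
    (hFf : ∀ z ∈ closedBall (t₀ : ℂ) a, Complex.exp (F z) = f z)
    (hbound : ∀ z ∈ closedBall (t₀ : ℂ) a, |Real.log ‖f z‖| ≤ C)
    (m : ℕ) (hm : 1 ≤ m) :
    |iteratedDeriv m (fun t : ℝ => (F (t : ℂ)).im) t₀|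
      ≤ 3 * 2 ^ m * m.factorial * C / a ^ m := by
  have hre : ∀ z ∈ sphere (t₀ : ℂ) a, |(F z).re| ≤ C := fun z hz => by
    have hz' := sphere_subset_closedBall hz
    rw [← Real.log_exp (F z).re, ← norm_exp, hFf z hz']
    exact hbound z hz'
  rw [iteratedDeriv_im_comp_ofReal hU hF m (hball (mem_closedBall_self ha.le))]
  calc |(iteratedDeriv m F t₀).im|
      ≤ ‖iteratedDeriv m F t₀‖ := abs_im_le_norm _
    _ ≤ 2 * m.factorial * C / a ^ m :=
        (hF.diffContOnCl_ball hball).norm_iteratedDeriv_le_of_forall_mem_sphere_abs_re_le ha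
          (by omega) hre
    _ ≤ 3 * 2 ^ m * m.factorial * C / a ^ m := by
        have h2m : (2 : ℝ) ≤ 2 ^ m := by simpa using pow_le_pow_right₀ one_le_two hm
        gcongr
        linarith

/-- second half of Lemma 1 of the paper. For a nonvanishing holomorphic
function `f` on a neighborhood of the closed disc of radius `a` around the real point `t₀`,
with `|log |f|| ≤ C` on the disc, and a holomorphic branch `F` of the logarithm of `f`
with phase `φ(t) = Im F(t)`, the `m`-th real-time derivative of the phase at `t₀` is
bounded by `3 · 2^m · m! · C / a^m`. -/
theorem real_time_deriv_phase_bound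
    (a C : ℝ) (ha : 0 < a) (hC : 0 ≤ C) (t₀ : ℝ)
    (f F : ℂ → ℂ) (U : Set ℂ) (hU : IsOpen U)
    (hball : closedBall (t₀ : ℂ) a ⊆ U)
    (hf : DifferentiableOn ℂ f U)
    (hf0 : ∀ z ∈ U, f z ≠ 0)
    (hF : DifferentiableOn ℂ F U)
    (hFf : ∀ z ∈ closedBall (t₀ : ℂ) a, Complex.exp (F z) = f z)
    (hbound : ∀ z ∈ closedBall (t₀ : ℂ) a, |Real.log ‖f z‖| ≤ C)
    (m : ℕ) (hm : 1 ≤ m) :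
    |iteratedDeriv m (fun t : ℝ => (F (t : ℂ)).im) t₀|
      ≤ 3 * 2 ^ m * m.factorial * C / a ^ m :=
  real_time_deriv_phase_bound_general a C ha hC t₀ f F U hU hball hF hFf hbound m hm
end

section
/- Under the setup of the previous statement (unit vector ψ ∈ ℂⁿ, Hermitian matrices H₁, …, H_Γ with H = Σⱼ Hⱼ, Hermitian Bⱼ with Bⱼ ψ = −i (Hⱼ ψ − ⟨ψ, Hⱼ ψ⟩ ψ), and cⱼ(h) = √(⟨ψ, exp(−2hHⱼ) ψ⟩)), let v ∈ ℂⁿ satisfy ⟨v, ψ⟩ ≠ 0. Then the functions h ↦ log |⟨v, exp(−h H) ψ⟩| and h ↦ log |⟨v, (∏ⱼ cⱼ(h)) exp(−ihB₁) ⋯ exp(−ihB_Γ) ψ⟩| are differentiable at h = 0 and have equal derivatives there. -/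
open Complex Matrix NormedSpace

open scoped InnerProductSpace

/-!
Both amplitudes equal `⟨v, ψ⟩ ≠ 0` at `h = 0`, and the derivative of `log ‖f‖` at a point where
`f ≠ 0` depends only on the value and the derivative of `f` there, so it suffices that the two
amplitudes have the same derivative `-⟨v, H ψ⟩` at `0`. For the circuit, the prefactor contributes
`-∑ⱼ ⟨ψ, Hⱼ ψ⟩ ⟨v, ψ⟩` (each `cⱼ'(0) = -⟨ψ, Hⱼ ψ⟩`, a real number as `Hⱼ` is Hermitian), while
the unitaries contribute `⟨v, -i ∑ⱼ Bⱼ ψ⟩ = ∑ⱼ (⟨ψ, Hⱼ ψ⟩ ⟨v, ψ⟩ - ⟨v, Hⱼ ψ⟩)`: the projection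
terms cancel.
-/

theorem HasDerivAt.log_norm {F : Type*} [NormedAddCommGroup F] [InnerProductSpace ℝ F]
    {f : ℝ → F} {f' : F} {x : ℝ} (hf : HasDerivAt f f' x) (hx : f x ≠ 0) :
    HasDerivAt (fun t => Real.log ‖f t‖) (⟪f x, f'⟫_ℝ / ‖f x‖ ^ 2) x := by
  have hsq := hf.norm_sq.log (by positivity)
  have half : (fun t => Real.log ‖f t‖) = fun t => Real.log (‖f t‖ ^ 2) / 2 := by
    funext t
    rw [Real.log_pow]
    push_cast
    ring
  rw [half]
  exact (hsq.div_const 2).congr_deriv (by ring)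

theorem HasDerivAt.list_prod_of_eq_one {𝕜 𝔸 ι : Type*} [NontriviallyNormedField 𝕜]
    [NormedRing 𝔸] [NormedAlgebra 𝕜 𝔸] {l : List ι} {f : ι → 𝕜 → 𝔸} {f' : ι → 𝔸} {x : 𝕜}
    (hf : ∀ i ∈ l, HasDerivAt (f i) (f' i) x) (hf1 : ∀ i ∈ l, f i x = 1) :
    HasDerivAt (fun t => (l.map (f · t)).prod) (l.map f').sum x := by
  induction l with
  | nil => simpa using hasDerivAt_const x (1 : 𝔸)
  | cons i l ih =>
    simp only [List.forall_mem_cons] at hf hf1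
    have hl1 : (l.map (f · x)).prod = 1 := List.prod_eq_one (by simpa using hf1.2)
    simpa [hf1.1, hl1] using hf.1.fun_mul (ih hf.2 hf1.2)

theorem hasDerivAt_exp_smul_of_eq_zero {𝔸 : Type*} [NormedRing 𝔸] [NormedAlgebra ℂ 𝔸]
    [CompleteSpace 𝔸] {φ : ℝ → ℂ} {a : ℂ} {x : ℝ} (hφ : HasDerivAt φ a x) (hφx : φ x = 0)
    (C : 𝔸) : HasDerivAt (fun t => exp (φ t • C)) (a • C) x := by
  have hexp := (hasFDerivAt_exp_zero (𝕂 := ℂ) (𝔸 := 𝔸)).restrictScalars ℝ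
  rw [← zero_smul ℂ C, ← hφx] at hexp
  exact hexp.comp_hasDerivAt x (hφ.smul_const C)

section MatrixOverlap

-- Any norm would do: all induce the product topology for which `exp` is taken.
attribute [local instance] Matrix.linftyOpNormedAddCommGroup Matrix.linftyOpNormedRing
  Matrix.linftyOpNormedAlgebra

variable {m : Type*} [Fintype m]

theorem Matrix.IsHermitian.coe_re_star_dotProduct_mulVec_self {A : Matrix m m ℂ}
    (hA : A.IsHermitian) (x : m → ℂ) : ((star x ⬝ᵥ A *ᵥ x).re : ℂ) = star x ⬝ᵥ A *ᵥ x :=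
  Complex.ext rfl (by simpa using (hA.im_star_dotProduct_mulVec_self x).symm)

theorem I_smul_mulVec_of_mulVec_eq {H B : Matrix m m ℂ} {ψ : m → ℂ}
    (hBψ : B *ᵥ ψ = (-I) • (H *ᵥ ψ - (star ψ ⬝ᵥ H *ᵥ ψ) • ψ)) :
    (I • B) *ᵥ ψ = H *ᵥ ψ - (star ψ ⬝ᵥ H *ᵥ ψ) • ψ := by
  rw [smul_mulVec, hBψ, smul_smul, mul_neg, I_mul_I, neg_neg, one_smul]

variable [DecidableEq m]

theorem HasDerivAt.dotProduct_mulVec {F : ℝ → Matrix m m ℂ} {F' : Matrix m m ℂ} {x : ℝ}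
    (hF : HasDerivAt F F' x) (u ψ : m → ℂ) :
    HasDerivAt (fun t => u ⬝ᵥ F t *ᵥ ψ) (u ⬝ᵥ F' *ᵥ ψ) x := by
  let L : Matrix m m ℂ →ₗ[ℝ] ℂ :=
    { toFun := fun M => u ⬝ᵥ M *ᵥ ψ
      map_add' := fun M N => by simp [add_mulVec, dotProduct_add]
      map_smul' := fun r M => by simp [smul_mulVec, dotProduct_smul] }
  exact (LinearMap.toContinuousLinearMap L).hasFDerivAt.comp_hasDerivAt x hF

theorem hasDerivAt_listProd_exp_neg_I_smul {Γ : ℕ} (B : Fin Γ → Matrix m m ℂ) :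
    HasDerivAt (fun h : ℝ => (List.ofFn fun j => exp ((-(I * (h : ℂ))) • B j)).prod)
      (∑ j, (-I) • B j) 0 := by
  have hφ : HasDerivAt (fun h : ℝ => -(I * (h : ℂ))) (-I) 0 := by
    simpa using ((hasDerivAt_id (0 : ℝ)).ofReal_comp.const_mul I).fun_neg
  have hfactor : ∀ j ∈ List.finRange Γ,
      HasDerivAt (fun h : ℝ => exp ((-(I * (h : ℂ))) • B j)) ((-I) • B j) 0 :=
    fun j _ => hasDerivAt_exp_smul_of_eq_zero hφ (by simp) (B j)
  have hprod := HasDerivAt.list_prod_of_eq_one hfactor (fun j _ => by simp)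
  simp only [← List.ofFn_eq_map, List.sum_ofFn] at hprod
  exact hprod

theorem hasDerivAt_sqrt_re_dotProduct_exp {ψ : m → ℂ} (hψ : star ψ ⬝ᵥ ψ = 1)
    (A : Matrix m m ℂ) :
    HasDerivAt (fun h : ℝ => Real.sqrt ((star ψ ⬝ᵥ exp ((-(2 * h : ℝ) : ℂ) • A) *ᵥ ψ).re))
      (-(star ψ ⬝ᵥ A *ᵥ ψ).re) 0 := by
  have hφ : HasDerivAt (fun h : ℝ => ((-(2 * h : ℝ) : ℂ))) (-2) 0 := by
    simpa using ((hasDerivAt_id (0 : ℝ)).const_mul 2).fun_neg.ofReal_comp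
  have hexpect :=
    (hasDerivAt_exp_smul_of_eq_zero hφ (by simp) A).dotProduct_mulVec (star ψ) ψ
  have hre := reCLM.hasFDerivAt.comp_hasDerivAt (0 : ℝ) hexpect
  refine (hre.sqrt (by simp [hψ])).congr_deriv ?_
  simp [hψ, neg_mulVec, smul_mulVec, dotProduct_smul]
  ring

theorem hasDerivAt_dotProduct_exp_neg_smul (u ψ : m → ℂ) (A : Matrix m m ℂ) :
    HasDerivAt (fun h : ℝ => u ⬝ᵥ exp ((-(h : ℝ) : ℂ) • A) *ᵥ ψ) (-(u ⬝ᵥ A *ᵥ ψ)) 0 := by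
  have hφ : HasDerivAt (fun h : ℝ => -(h : ℂ)) (-1) 0 := by
    simpa using (hasDerivAt_id (0 : ℝ)).ofReal_comp.fun_neg
  refine ((hasDerivAt_exp_smul_of_eq_zero hφ (by simp) A).dotProduct_mulVec u ψ).congr_deriv ?_
  simp [neg_mulVec]

theorem hasDerivAt_circuit_overlap {Γ : ℕ} {ψ : m → ℂ} {H B : Fin Γ → Matrix m m ℂ}
    (hH : ∀ j, (H j).IsHermitian)
    (hBψ : ∀ j, B j *ᵥ ψ = (-I) • (H j *ᵥ ψ - (star ψ ⬝ᵥ H j *ᵥ ψ) • ψ))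
    {c : Fin Γ → ℝ → ℝ} (hc0 : ∀ j, c j 0 = 1)
    (hc : ∀ j, HasDerivAt (c j) (-(star ψ ⬝ᵥ H j *ᵥ ψ).re) 0) (u : m → ℂ) :
    HasDerivAt (fun h : ℝ => ((∏ j, c j h : ℝ) : ℂ) *
        (u ⬝ᵥ (List.ofFn fun j => exp ((-(I * (h : ℂ))) • B j)).prod *ᵥ ψ))
      (-(u ⬝ᵥ (∑ j, H j) *ᵥ ψ)) 0 := by
  have hprod : HasDerivAt (fun h => ∏ j, c j h) (-∑ j, (star ψ ⬝ᵥ H j *ᵥ ψ).re) 0 := by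
    refine (HasDerivAt.fun_finsetProd (u := Finset.univ) fun j _ => hc j).congr_deriv ?_
    simp [hc0]
  have hgenerator : u ⬝ᵥ (∑ j, (-I) • B j) *ᵥ ψ =
      (∑ j, star ψ ⬝ᵥ H j *ᵥ ψ) * (u ⬝ᵥ ψ) - u ⬝ᵥ (∑ j, H j) *ᵥ ψ := by
    simp [neg_mulVec, sum_mulVec, dotProduct_sum, I_smul_mulVec_of_mulVec_eq (hBψ _),
      dotProduct_sub, Finset.sum_sub_distrib, Finset.sum_mul]
  have hcircuit := (hasDerivAt_listProd_exp_neg_I_smul B).dotProduct_mulVec u ψ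
  refine (hprod.ofReal_comp.mul hcircuit).congr_deriv ?_
  rw [hgenerator]
  simp [hc0, (hH _).coe_re_star_dotProduct_mulVec_self]
  ring

end MatrixOverlap

theorem log_abs_overlap_first_order_agreement_general
    (n Γ : ℕ) (ψ : Fin n → ℂ) (hψ : star ψ ⬝ᵥ ψ = 1)
    (H : Fin Γ → Matrix (Fin n) (Fin n) ℂ) (hH : ∀ j, (H j).IsHermitian)
    (B : Fin Γ → Matrix (Fin n) (Fin n) ℂ)
    (hBψ : ∀ j, (B j).mulVec ψ =
      (-Complex.I) • ((H j).mulVec ψ - (star ψ ⬝ᵥ (H j).mulVec ψ) • ψ))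
    (c : Fin Γ → ℝ → ℝ)
    (hc : ∀ j h, c j h =
      Real.sqrt ((star ψ ⬝ᵥ (NormedSpace.exp ((-(2 * h : ℝ) : ℂ) • H j)).mulVec ψ).re))
    (v : Fin n → ℂ) (hv : star v ⬝ᵥ ψ ≠ 0) :
    DifferentiableAt ℝ
        (fun h : ℝ => Real.log (norm
          (star v ⬝ᵥ (NormedSpace.exp ((-(h : ℝ) : ℂ) • ∑ j : Fin Γ, H j)).mulVec ψ))) 0 ∧
      DifferentiableAt ℝ
        (fun h : ℝ => Real.log (norm
          (((∏ j : Fin Γ, c j h : ℝ) : ℂ) *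
            (star v ⬝ᵥ ((List.ofFn fun j : Fin Γ =>
              NormedSpace.exp ((-(Complex.I * (h : ℂ))) • B j)).prod.mulVec ψ))))) 0 ∧
      deriv (fun h : ℝ => Real.log (norm
          (star v ⬝ᵥ (NormedSpace.exp ((-(h : ℝ) : ℂ) • ∑ j : Fin Γ, H j)).mulVec ψ))) 0 =
        deriv (fun h : ℝ => Real.log (norm
          (((∏ j : Fin Γ, c j h : ℝ) : ℂ) *
            (star v ⬝ᵥ ((List.ofFn fun j : Fin Γ =>
              NormedSpace.exp ((-(Complex.I * (h : ℂ))) • B j)).prod.mulVec ψ))))) 0 := by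
  obtain rfl : c = _ := funext fun j => funext (hc j)
  have hITE := (hasDerivAt_dotProduct_exp_neg_smul (star v) ψ (∑ j, H j)).log_norm
    (by simpa using hv)
  have hcircuit := (hasDerivAt_circuit_overlap hH hBψ (fun j => by simp [hψ])
    (fun j => hasDerivAt_sqrt_re_dotProduct_exp hψ (H j)) (star v)).log_norm
    (by simpa [hψ] using hv)
  refine ⟨hITE.differentiableAt, hcircuit.differentiableAt, ?_⟩
  rw [hITE.deriv, hcircuit.deriv]
  simp [hψ]

/-- Replacing the exact imaginary-time evolution by the rescaled unitary
circuit does not change the first derivative at `h = 0` of the logarithm of the magnitude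
of the overlap with any vector `v` satisfying `⟨v, ψ⟩ ≠ 0`. -/
theorem log_abs_overlap_first_order_agreement
    (n Γ : ℕ) (ψ : Fin n → ℂ) (hψ : star ψ ⬝ᵥ ψ = 1)
    (H : Fin Γ → Matrix (Fin n) (Fin n) ℂ) (hH : ∀ j, (H j).IsHermitian)
    (B : Fin Γ → Matrix (Fin n) (Fin n) ℂ) (hB : ∀ j, (B j).IsHermitian)
    (hBψ : ∀ j, (B j).mulVec ψ =
      (-Complex.I) • ((H j).mulVec ψ - (star ψ ⬝ᵥ (H j).mulVec ψ) • ψ))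
    (c : Fin Γ → ℝ → ℝ)
    (hc : ∀ j h, c j h =
      Real.sqrt ((star ψ ⬝ᵥ (NormedSpace.exp ((-(2 * h : ℝ) : ℂ) • H j)).mulVec ψ).re))
    (v : Fin n → ℂ) (hv : star v ⬝ᵥ ψ ≠ 0) :
    DifferentiableAt ℝ
        (fun h : ℝ => Real.log (norm
          (star v ⬝ᵥ (NormedSpace.exp ((-(h : ℝ) : ℂ) • ∑ j : Fin Γ, H j)).mulVec ψ))) 0 ∧
      DifferentiableAt ℝ
        (fun h : ℝ => Real.log (norm
          (((∏ j : Fin Γ, c j h : ℝ) : ℂ) *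
            (star v ⬝ᵥ ((List.ofFn fun j : Fin Γ =>
              NormedSpace.exp ((-(Complex.I * (h : ℂ))) • B j)).prod.mulVec ψ))))) 0 ∧
      deriv (fun h : ℝ => Real.log (norm
          (star v ⬝ᵥ (NormedSpace.exp ((-(h : ℝ) : ℂ) • ∑ j : Fin Γ, H j)).mulVec ψ))) 0 =
        deriv (fun h : ℝ => Real.log (norm
          (((∏ j : Fin Γ, c j h : ℝ) : ℂ) *
            (star v ⬝ᵥ ((List.ofFn fun j : Fin Γ =>
              NormedSpace.exp ((-(Complex.I * (h : ℂ))) • B j)).prod.mulVec ψ))))) 0 :=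
  log_abs_overlap_first_order_agreement_general n Γ ψ hψ H hH B hBψ c hc v hv
end
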